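/- arXiv:2511.03193 — 5 statements merged into one kernel-verified Lean document; each statement's English description precedes it below -/
import Mathlib

section
/- Let A ⊆ ℝᵈ be a convex set, x ∈ A, and let y ∈ ∂A satisfy ‖x − y‖ = inf{‖x − z‖ : z ∈ ∂A}. Then (x − y)ᵀ(z − y) ≥ 0 for all z ∈ A. -/
open scoped RealInnerProductSpace

/-- Let `A ⊆ ℝᵈ` be convex, `x ∈ A`, and let `y ∈ ∂A` be a nearest point of
the boundary to `x`, i.e. `‖x − y‖ = inf{‖x − z‖ : z ∈ ∂A}`. Then
`⟪x − y, z − y⟫ ≥ 0` for all `z ∈ A`. -/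
theorem nearest_boundary_point_obtuse
    {d : ℕ} (A : Set (EuclideanSpace ℝ (Fin d))) (hA : Convex ℝ A)
    (x : EuclideanSpace ℝ (Fin d)) (hx : x ∈ A)
    (y : EuclideanSpace ℝ (Fin d)) (hy : y ∈ frontier A)
    (hmin : ‖x - y‖ = Metric.infDist x (frontier A)) :
    ∀ z ∈ A, 0 ≤ ⟪x - y, z - y⟫ := by
  intro z hz
  rcases eq_or_ne x y with rfl | hxy
  · simp
  set r : ℝ := ‖x - y‖ with hr
  have hrpos : 0 < r := by
    simpa [hr, sub_eq_zero] using hxy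
  -- x is not on the frontier
  have hxf : x ∉ frontier A := by
    intro hxf
    have h0 : Metric.infDist x (frontier A) = 0 := Metric.infDist_zero_of_mem hxf
    rw [h0] at hmin
    exact absurd hmin (ne_of_gt hrpos)
  have hxint : x ∈ interior A := by
    have hxcl : x ∈ closure A := subset_closure hx
    rw [closure_eq_interior_union_frontier] at hxcl
    rcases hxcl with h | h
    · exact h
    · exact absurd h hxf
  -- the open ball around x of radius r is disjoint from the frontier
  have hball_front : ∀ w ∈ Metric.ball x r, w ∉ frontier A := by
    intro w hw hwf
    have h1 : r ≤ dist x w := by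
      rw [hmin]; exact Metric.infDist_le_dist_of_mem hwf
    rw [Metric.mem_ball, dist_comm] at hw
    linarith
  -- the open ball is contained in the interior of A
  have hball : Metric.ball x r ⊆ interior A := by
    refine IsPreconnected.subset_left_of_subset_union
      isOpen_interior isClosed_closure.isOpen_compl
      (Disjoint.mono_left interior_subset_closure disjoint_compl_right)
      ?_ ⟨x, Metric.mem_ball_self hrpos, hxint⟩
      ((convex_ball x r).isPreconnected)
    intro w hw
    by_cases hwc : w ∈ closure A
    · left
      rw [closure_eq_interior_union_frontier] at hwc
      rcases hwc with h | h
      · exact h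
      · exact absurd h (hball_front w hw)
    · right; exact hwc
  -- separating hyperplane at y
  obtain ⟨f, hf⟩ := geometric_hahn_banach_open_point
    (hA.interior) isOpen_interior hy.2
  -- f ≤ f y on the closure of A
  have hfle : ∀ w ∈ closure A, f w ≤ f y := by
    have h1 : closure A ⊆ closure (interior A) := by
      intro w hw
      have hseg : openSegment ℝ x w ⊆ interior A :=
        hA.openSegment_interior_closure_subset_interior hxint hw
      have : w ∈ closure (openSegment ℝ x w) :=
        segment_subset_closure_openSegment (right_mem_segment ℝ x w)
      exact closure_mono hseg this
    intro w hw
    have h2 : w ∈ closure {u : EuclideanSpace ℝ (Fin d) | f u ≤ f y} :=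
      closure_mono (fun u hu => (hf u hu).le) (h1 hw)
    have hcl : IsClosed {u : EuclideanSpace ℝ (Fin d) | f u ≤ f y} :=
      isClosed_le f.continuous continuous_const
    exact hcl.closure_subset h2
  -- translate f into an inner product with vector v
  set v : EuclideanSpace ℝ (Fin d) :=
    (InnerProductSpace.toDual ℝ (EuclideanSpace ℝ (Fin d))).symm f with hv
  have hfv : ∀ w : EuclideanSpace ℝ (Fin d), f w = ⟪v, w⟫ := fun w =>
    (InnerProductSpace.toDual_symm_apply).symm
  have hvne : v ≠ 0 := by
    intro h0
    have h1 := hf x hxint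
    rw [hfv x, hfv y, h0] at h1
    simp at h1
  have hvnorm : (0:ℝ) < ‖v‖ := norm_pos_iff.2 hvne
  -- the point x + (r/‖v‖) • v lies in the closed ball, hence in closure A
  set a : EuclideanSpace ℝ (Fin d) := x + (r / ‖v‖) • v with ha
  have hacl : a ∈ closure A := by
    have h1 : a ∈ Metric.closedBall x r := by
      rw [Metric.mem_closedBall, dist_eq_norm, ha]
      simp only [add_sub_cancel_left, norm_smul, Real.norm_eq_abs,
        abs_div, abs_of_pos hrpos, abs_of_pos hvnorm]
      rw [div_mul_cancel₀ _ (ne_of_gt hvnorm)]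
    have h2 : Metric.closedBall x r = closure (Metric.ball x r) :=
      (closure_ball x (ne_of_gt hrpos)).symm
    rw [h2] at h1
    exact (closure_mono (hball.trans interior_subset)) h1
  have key : ⟪v, y - x⟫ = ‖v‖ * ‖y - x‖ := by
    have h1 : f a ≤ f y := hfle a hacl
    rw [hfv a, hfv y, ha] at h1
    rw [inner_add_right, real_inner_smul_right, real_inner_self_eq_norm_sq] at h1
    have hmul : r / ‖v‖ * ‖v‖ ^ 2 = r * ‖v‖ := by
      field_simp
    have h2 : ⟪v, x⟫ + r * ‖v‖ ≤ ⟪v, y⟫ := by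
      rw [hmul] at h1; linarith
    have h3 : r * ‖v‖ ≤ ⟪v, y - x⟫ := by
      rw [inner_sub_right]; linarith
    have h4 : ⟪v, y - x⟫ ≤ ‖v‖ * ‖y - x‖ := real_inner_le_norm v (y - x)
    have h5 : ‖y - x‖ = r := by rw [norm_sub_rev]
    rw [h5]; nlinarith
  -- equality in Cauchy–Schwarz: y - x is a positive multiple of v
  have heq : ‖y - x‖ • v = ‖v‖ • (y - x) := inner_eq_norm_mul_iff_real.1 key
  have hyx : y - x = (‖y - x‖ / ‖v‖) • v := by
    rw [div_eq_mul_inv, mul_comm, mul_smul, heq, ← mul_smul,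
      inv_mul_cancel₀ (ne_of_gt hvnorm), one_smul]
  -- finish
  have hzle : ⟪v, z - y⟫ ≤ 0 := by
    have h1 := hfle z (subset_closure hz)
    rw [hfv z, hfv y] at h1
    rw [inner_sub_right]; linarith
  have hxy' : x - y = -((‖y - x‖ / ‖v‖) • v) := by
    rw [← hyx]; abel
  rw [hxy', inner_neg_left, real_inner_smul_left]
  have hdiv : (0:ℝ) ≤ ‖y - x‖ / ‖v‖ := div_nonneg (norm_nonneg _) (norm_nonneg _)
  nlinarith
end

section
/- Let A ⊆ ℝᵈ be a compact convex set with B(0, r) ⊆ A for some r > 0. Then for any γ > 0, Vol(Aᵞ \ A) / Vol(A) ≤ (dγ/r)(1 + γ/r)^{d−1}, where Aᵞ = {x ∈ ℝᵈ : dist(x, A) ≤ γ} is the γ-inflation of A. -/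
open MeasureTheory Pointwise

lemma pow_sub_one_le_aux (d : ℕ) (t : ℝ) (ht : 0 ≤ t) :
    (1 + t) ^ d - 1 ≤ d * t * (1 + t) ^ (d - 1) := by
  have h1 : (1:ℝ) ≤ 1 + t := by linarith
  have hgeom : (∑ i ∈ Finset.range d, (1 + t) ^ i) * ((1 + t) - 1) = (1 + t) ^ d - 1 :=
    geom_sum_mul (1 + t) d
  have hsum : (∑ i ∈ Finset.range d, (1 + t) ^ i) ≤ d * (1 + t) ^ (d - 1) := by
    calc (∑ i ∈ Finset.range d, (1 + t) ^ i)
        ≤ ∑ _i ∈ Finset.range d, (1 + t) ^ (d - 1) := by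
          apply Finset.sum_le_sum
          intro i hi
          exact pow_le_pow_right₀ h1 (Nat.le_sub_one_of_lt (Finset.mem_range.mp hi))
      _ = d * (1 + t) ^ (d - 1) := by simp [mul_comm]
  have hpow : (0:ℝ) ≤ (1 + t) ^ (d - 1) := by positivity
  calc (1 + t) ^ d - 1 = (∑ i ∈ Finset.range d, (1 + t) ^ i) * t := by
        rw [← hgeom]; ring_nf
    _ ≤ (d * (1 + t) ^ (d - 1)) * t := by
        exact mul_le_mul_of_nonneg_right hsum ht
    _ = d * t * (1 + t) ^ (d - 1) := by ring

/-- Let `A ⊆ ℝᵈ` be a compact convex set with `B(0, r) ⊆ A` for some `r > 0`.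
Then for any `γ > 0`,
`Vol(Aᵞ \ A) / Vol(A) ≤ (dγ/r)(1 + γ/r)^{d−1}`,
where `Aᵞ = {x : dist(x, A) ≤ γ}` is the `γ`-inflation of `A`. -/
theorem inflation_volume_ratio_bound
    {d : ℕ} (A : Set (EuclideanSpace ℝ (Fin d))) (hAc : IsCompact A) (hAconv : Convex ℝ A)
    (r : ℝ) (hr : 0 < r) (hball : Metric.closedBall (0 : EuclideanSpace ℝ (Fin d)) r ⊆ A)
    (γ : ℝ) (hγ : 0 < γ) :
    volume ({x : EuclideanSpace ℝ (Fin d) | Metric.infDist x A ≤ γ} \ A) / volume A ≤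
      ENNReal.ofReal ((d * γ / r) * (1 + γ / r) ^ (d - 1)) := by
  set t : ℝ := γ / r with htdef
  have ht : 0 < t := div_pos hγ hr
  have h1t : (0:ℝ) < 1 + t := by linarith
  have hA0 : (0 : EuclideanSpace ℝ (Fin d)) ∈ A :=
    hball (Metric.mem_closedBall_self hr.le)
  have hAne : A.Nonempty := ⟨0, hA0⟩
  -- volume A is positive and finite
  have hv0 : volume A ≠ 0 := by
    have : 0 < volume (Metric.closedBall (0 : EuclideanSpace ℝ (Fin d)) r) :=
      Metric.measure_closedBall_pos volume _ hr
    exact (lt_of_lt_of_le this (measure_mono hball)).ne'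
  have hvt : volume A ≠ ⊤ := hAc.measure_lt_top.ne
  -- inflation is contained in (1+t) • A
  have hS : {x : EuclideanSpace ℝ (Fin d) | Metric.infDist x A ≤ γ} ⊆ (1 + t) • A := by
    intro x hx
    obtain ⟨a, haA, hda⟩ := hAc.exists_infDist_eq_dist hAne x
    have hxa : dist x a ≤ γ := by rw [← hda]; exact hx
    set y : EuclideanSpace ℝ (Fin d) := (r / γ) • (x - a) with hy
    have hyA : y ∈ A := by
      apply hball
      rw [Metric.mem_closedBall, dist_zero_right, hy, norm_smul]
      have : ‖x - a‖ ≤ γ := by rwa [← dist_eq_norm]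
      calc ‖(r/γ)‖ * ‖x - a‖ ≤ |r/γ| * γ :=
            mul_le_mul_of_nonneg_left this (abs_nonneg _)
        _ = (r/γ) * γ := by rw [abs_of_pos (div_pos hr hγ)]
        _ = r := div_mul_cancel₀ r hγ.ne'
    have hcomb : (1 / (1 + t)) • a + (t / (1 + t)) • y ∈ A := by
      apply hAconv haA hyA
      · positivity
      · positivity
      · field_simp
    refine Set.mem_smul_set.mpr ⟨_, hcomb, ?_⟩
    rw [smul_add, smul_smul, smul_smul]
    have e1 : (1 + t) * (1 / (1 + t)) = 1 := by field_simp
    have e2 : (1 + t) * (t / (1 + t)) = t := by field_simp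
    rw [e1, e2, one_smul, hy, smul_smul, htdef]
    have e3 : γ / r * (r / γ) = 1 := by field_simp
    rw [e3, one_smul]
    abel
  have hAsubS : A ⊆ {x : EuclideanSpace ℝ (Fin d) | Metric.infDist x A ≤ γ} := by
    intro a ha
    simp only [Set.mem_setOf_eq]
    rw [Metric.infDist_zero_of_mem ha]
    exact hγ.le
  -- volume of the scaled set
  have hsmul : volume ((1 + t) • A) = ENNReal.ofReal ((1 + t) ^ d) * volume A := by
    rw [Measure.addHaar_smul_of_nonneg volume h1t.le A, finrank_euclideanSpace_fin]
  -- bound the volume of the difference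
  have hdiff : volume ({x : EuclideanSpace ℝ (Fin d) | Metric.infDist x A ≤ γ} \ A) ≤
      ENNReal.ofReal (↑d * t * (1 + t) ^ (d - 1)) * volume A := by
    have h1 : volume ({x : EuclideanSpace ℝ (Fin d) | Metric.infDist x A ≤ γ} \ A) ≤
        volume ((1 + t) • A \ A) := measure_mono (Set.diff_subset_diff_left hS)
    have h2 : volume ((1 + t) • A \ A) = volume ((1 + t) • A) - volume A :=
      measure_diff (hAsubS.trans hS) hAc.isClosed.measurableSet.nullMeasurableSet hvt
    have h3 : volume ((1 + t) • A) - volume A =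
        ENNReal.ofReal ((1 + t) ^ d - 1) * volume A := by
      rw [hsmul, ENNReal.ofReal_sub _ (by norm_num : (0:ℝ) ≤ 1), ENNReal.sub_mul
        (fun _ _ => hvt), ENNReal.ofReal_one, one_mul]
    have h4 : ENNReal.ofReal ((1 + t) ^ d - 1) ≤ ENNReal.ofReal (↑d * t * (1 + t) ^ (d - 1)) :=
      ENNReal.ofReal_le_ofReal (pow_sub_one_le_aux d t ht.le)
    calc volume ({x : EuclideanSpace ℝ (Fin d) | Metric.infDist x A ≤ γ} \ A)
        ≤ volume ((1 + t) • A \ A) := h1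
      _ = ENNReal.ofReal ((1 + t) ^ d - 1) * volume A := by rw [h2, h3]
      _ ≤ ENNReal.ofReal (↑d * t * (1 + t) ^ (d - 1)) * volume A :=
          mul_le_mul_left h4 _
  rw [ENNReal.div_le_iff hv0 hvt]
  have : (↑d * γ / r) * (1 + γ / r) ^ (d - 1) = ↑d * t * (1 + t) ^ (d - 1) := by
    rw [htdef]; ring
  rw [this]
  exact hdiff
end

section
/- Let z ∈ Ω for a compact convex Ω ⊆ ℝᵈ. Then sup_{y ∈ Ω} ‖z − y‖ ≤ diam(Ω) − dist(z, ∂Ω). -/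
/-- For a compact convex `Ω ⊆ ℝᵈ` with non-empty interior and `z ∈ Ω`,
`sup_{y ∈ Ω} ‖z − y‖ ≤ diam(Ω) - Metric.infDist z (frontier Ω)`. -/
theorem dist_in_convex_le_diam_sub_boundary_dist
    {d : ℕ} (Ω : Set (EuclideanSpace ℝ (Fin d))) (hΩc : IsCompact Ω) (hΩconv : Convex ℝ Ω)
    (hΩint : (interior Ω).Nonempty)
    (z : EuclideanSpace ℝ (Fin d)) (hz : z ∈ Ω) :
    ∀ y ∈ Ω, ‖z - y‖ ≤ Metric.diam Ω - Metric.infDist z (frontier Ω) := by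
  intro y hy
  set r := Metric.infDist z (frontier Ω) with hr
  have hr0 : 0 ≤ r := Metric.infDist_nonneg
  have hΩclosed : IsClosed Ω := hΩc.isClosed
  rcases eq_or_lt_of_le hr0 with h0 | hrpos
  · rw [← h0, sub_zero, ← dist_eq_norm]
    exact Metric.dist_le_diam_of_mem hΩc.isBounded hz hy
  -- r > 0
  have hfr_ne : (frontier Ω).Nonempty := by
    by_contra h
    rw [Set.not_nonempty_iff_eq_empty] at h
    rw [hr, h, Metric.infDist_empty] at hrpos
    exact lt_irrefl _ hrpos
  have hball : Metric.closedBall z r ⊆ Ω := by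
    have hball' : Metric.ball z r ⊆ Ω := by
      have hsub : Metric.ball z r ⊆ interior Ω ∪ interior Ωᶜ := by
        rw [← compl_frontier_eq_union_interior]
        intro x hx
        exact (Metric.disjoint_ball_infDist (s := frontier Ω)).subset_compl_right hx
      have hzi : z ∈ interior Ω := by
        have hznf : z ∉ frontier Ω := fun hzf => by
          rw [hr, Metric.infDist_zero_of_mem hzf] at hrpos
          exact lt_irrefl _ hrpos
        rw [hΩclosed.frontier_eq] at hznf
        by_contra hc
        exact hznf ⟨hz, hc⟩
      have hconn : IsPreconnected (Metric.ball z r) :=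
        (convex_ball z r).isPreconnected
      have : Metric.ball z r ⊆ interior Ω :=
        hconn.subset_left_of_subset_union isOpen_interior isOpen_interior
          (disjoint_compl_right.mono interior_subset interior_subset) hsub
          ⟨z, Metric.mem_ball_self hrpos, hzi⟩
      exact this.trans interior_subset
    rw [← closure_ball z (ne_of_gt hrpos), ← hΩclosed.closure_eq]
    exact closure_mono hball'
  rcases eq_or_ne y z with rfl | hyz
  · -- need r ≤ diam Ω
    obtain ⟨w, hw⟩ := hfr_ne
    have hwΩ : w ∈ Ω := by
      have := frontier_subset_closure (s := Ω) hw
      rwa [hΩclosed.closure_eq] at this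
    have h1 : r ≤ dist y w := Metric.infDist_le_dist_of_mem hw
    have h2 : dist y w ≤ Metric.diam Ω := Metric.dist_le_diam_of_mem hΩc.isBounded hz hwΩ
    simp only [sub_self, norm_zero]
    linarith
  · have hzy : z - y ≠ 0 := sub_ne_zero.mpr (Ne.symm hyz)
    have hn : (0:ℝ) < ‖z - y‖ := norm_pos_iff.mpr hzy
    set u : EuclideanSpace ℝ (Fin d) := ‖z - y‖⁻¹ • (z - y) with hu
    set w : EuclideanSpace ℝ (Fin d) := z + r • u with hwdef
    have hwball : w ∈ Metric.closedBall z r := by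
      rw [Metric.mem_closedBall, dist_eq_norm, hwdef]
      have : z + r • u - z = r • u := by abel
      rw [this, norm_smul, hu, norm_smul, norm_inv, norm_norm,
        inv_mul_cancel₀ (ne_of_gt hn)]
      simp [abs_of_nonneg hr0]
    have hwΩ : w ∈ Ω := hball hwball
    have hkey : ‖w - y‖ = ‖z - y‖ + r := by
      have : w - y = (1 + r * ‖z - y‖⁻¹) • (z - y) := by
        rw [hwdef, hu, smul_smul, add_smul, one_smul]
        abel
      rw [this, norm_smul, Real.norm_eq_abs]
      have hpos : (0:ℝ) ≤ 1 + r * ‖z - y‖⁻¹ := by positivity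
      rw [abs_of_nonneg hpos]
      field_simp
    have : ‖w - y‖ ≤ Metric.diam Ω := by
      rw [← dist_eq_norm]
      exact Metric.dist_le_diam_of_mem hΩc.isBounded hwΩ hy
    linarith [hkey ▸ this]
end

section
/- Let F : [0,1] × S → ℝᵈ satisfy ‖F(t, x)‖ ≤ B for all t, x, and suppose there exist measurable a : [0,1] → [0,∞] and nondecreasing κ : [0,∞) → [0,∞) with κ(0) = 0 such that ‖F(t, y) − F(t, y')‖ ≤ a(t)κ(‖y − y'‖), where a(s) = c/s and κ(u) = u with c < 1. Then any two solutions y₁, y₂ of y(t) = x + ∫₀ᵗ F(s, y(s))ds on [0,T] coincide: for every γ ∈ (0,t), ‖y₁(t) − y₂(t)‖ ≤ t^c γ^{1−c} · 2B, and hence y₁(t) = y₂(t) for all t ∈ [0,T]. -/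
open MeasureTheory

/-- Let `F : [0,1] × S → ℝᵈ` be bounded by `B` and satisfy the Nagumo-type
condition `‖F(t,y) − F(t,y')‖ ≤ (c/t)‖y − y'‖` with `c < 1`. Then any two solutions
`y₁, y₂` of `y(t) = x + ∫₀ᵗ F(s, y(s)) ds` on `[0,T]` (with values in `S`) satisfy, for every
`γ ∈ (0,t)`, `‖y₁(t) − y₂(t)‖ ≤ t^c γ^{1−c} · 2B`, and hence `y₁ = y₂` on `[0,T]`. -/
theorem nagumo_uniqueness
    {d : ℕ} (S : Set (EuclideanSpace ℝ (Fin d)))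
    (F : ℝ → EuclideanSpace ℝ (Fin d) → EuclideanSpace ℝ (Fin d))
    (B c : ℝ) (hB : 0 ≤ B) (hc : c < 1)
    (hbound : ∀ t ∈ Set.Icc (0 : ℝ) 1, ∀ x ∈ S, ‖F t x‖ ≤ B)
    (hlip : ∀ t ∈ Set.Ioc (0 : ℝ) 1, ∀ y ∈ S, ∀ y' ∈ S,
      ‖F t y - F t y'‖ ≤ (c / t) * ‖y - y'‖)
    (T : ℝ) (hT : T ∈ Set.Icc (0 : ℝ) 1)
    (x : EuclideanSpace ℝ (Fin d)) (y₁ y₂ : ℝ → EuclideanSpace ℝ (Fin d))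
    (hmem : ∀ t ∈ Set.Icc (0 : ℝ) T, y₁ t ∈ S ∧ y₂ t ∈ S)
    (hint₁ : IntervalIntegrable (fun s => F s (y₁ s)) volume 0 T)
    (hint₂ : IntervalIntegrable (fun s => F s (y₂ s)) volume 0 T)
    (h₁ : ∀ t ∈ Set.Icc (0 : ℝ) T, y₁ t = x + ∫ s in (0 : ℝ)..t, F s (y₁ s))
    (h₂ : ∀ t ∈ Set.Icc (0 : ℝ) T, y₂ t = x + ∫ s in (0 : ℝ)..t, F s (y₂ s)) :
    (∀ t ∈ Set.Icc (0 : ℝ) T, ∀ γ ∈ Set.Ioo (0 : ℝ) t,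
      ‖y₁ t - y₂ t‖ ≤ t ^ c * γ ^ (1 - c) * (2 * B)) ∧
    ∀ t ∈ Set.Icc (0 : ℝ) T, y₁ t = y₂ t := by
  obtain ⟨hT0, hT1⟩ := hT
  set c' : ℝ := max c 0 with hc'def
  have hc'0 : 0 ≤ c' := le_max_right _ _
  have hc'1 : c' < 1 := max_lt hc one_pos
  -- difference equation
  have key : ∀ t ∈ Set.Icc (0 : ℝ) T,
      y₁ t - y₂ t = ∫ s in (0 : ℝ)..t, (F s (y₁ s) - F s (y₂ s)) := by
    intro t ht
    have hsub : Set.uIcc (0 : ℝ) t ⊆ Set.uIcc (0 : ℝ) T := by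
      rw [Set.uIcc_of_le ht.1, Set.uIcc_of_le hT0]
      exact Set.Icc_subset_Icc le_rfl ht.2
    have hi1 := hint₁.mono_set hsub
    have hi2 := hint₂.mono_set hsub
    rw [h₁ t ht, h₂ t ht, intervalIntegral.integral_sub hi1 hi2]
    abel
  -- iteration step
  have step : ∀ K : ℝ, 0 ≤ K →
      (∀ t ∈ Set.Icc (0 : ℝ) T, ‖y₁ t - y₂ t‖ ≤ K * t) →
      ∀ t ∈ Set.Icc (0 : ℝ) T, ‖y₁ t - y₂ t‖ ≤ (c' * K) * t := by
    intro K hK hrec t ht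
    rw [key t ht]
    have hle : ‖∫ s in (0 : ℝ)..t, (F s (y₁ s) - F s (y₂ s))‖ ≤
        (c' * K) * |t - 0| := by
      apply intervalIntegral.norm_integral_le_of_norm_le_const
      · intro s hs
        rw [Set.uIoc_of_le ht.1] at hs
        have hsT : s ∈ Set.Icc (0 : ℝ) T := ⟨hs.1.le, hs.2.trans ht.2⟩
        have hs1 : s ∈ Set.Ioc (0 : ℝ) 1 := ⟨hs.1, hs.2.trans (ht.2.trans hT1)⟩
        obtain ⟨hm1, hm2⟩ := hmem s hsT
        calc ‖F s (y₁ s) - F s (y₂ s)‖ ≤ (c / s) * ‖y₁ s - y₂ s‖ :=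
              hlip s hs1 _ hm1 _ hm2
          _ ≤ (c' / s) * ‖y₁ s - y₂ s‖ := by
              exact mul_le_mul_of_nonneg_right
                ((div_le_div_iff_of_pos_right hs.1).mpr (le_max_left c 0)) (norm_nonneg _)
          _ ≤ (c' / s) * (K * s) := by
              exact mul_le_mul_of_nonneg_left (hrec s hsT) (div_nonneg hc'0 hs.1.le)
          _ = c' * K * (s / s) := by ring
          _ = c' * K := by rw [div_self (ne_of_gt hs.1), mul_one]
    calc _ ≤ (c' * K) * |t - 0| := hle
      _ = (c' * K) * t := by rw [sub_zero, abs_of_nonneg ht.1]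
  have base : ∀ t ∈ Set.Icc (0:ℝ) T, ‖y₁ t - y₂ t‖ ≤ (2*B) * t := by
    intro t ht
    rw [key t ht]
    have hle : ‖∫ s in (0:ℝ)..t, (F s (y₁ s) - F s (y₂ s))‖ ≤ (2*B) * |t - 0| := by
      apply intervalIntegral.norm_integral_le_of_norm_le_const
      intro s hs
      rw [Set.uIoc_of_le ht.1] at hs
      have hsT : s ∈ Set.Icc (0:ℝ) T := ⟨hs.1.le, hs.2.trans ht.2⟩
      have hs1 : s ∈ Set.Icc (0:ℝ) 1 := ⟨hs.1.le, hs.2.trans (ht.2.trans hT1)⟩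
      obtain ⟨hm1, hm2⟩ := hmem s hsT
      calc ‖F s (y₁ s) - F s (y₂ s)‖ ≤ ‖F s (y₁ s)‖ + ‖F s (y₂ s)‖ := norm_sub_le _ _
        _ ≤ B + B := add_le_add (hbound s hs1 _ hm1) (hbound s hs1 _ hm2)
        _ = 2*B := by ring
    calc _ ≤ (2*B) * |t - 0| := hle
      _ = (2*B) * t := by rw [sub_zero, abs_of_nonneg ht.1]
  have bnd : ∀ n : ℕ, ∀ t ∈ Set.Icc (0:ℝ) T, ‖y₁ t - y₂ t‖ ≤ (2*B*c'^n) * t := by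
    intro n
    induction n with
    | zero => simpa using base
    | succ n ih =>
      intro t ht
      calc ‖y₁ t - y₂ t‖ ≤ (c' * (2*B*c'^n)) * t := step (2*B*c'^n) (by positivity) ih t ht
        _ = (2*B*c'^(n+1)) * t := by ring
  have heq : ∀ t ∈ Set.Icc (0:ℝ) T, y₁ t = y₂ t := by
    intro t ht
    have h0 : ‖y₁ t - y₂ t‖ ≤ 0 := by
      have hlim : Filter.Tendsto (fun n : ℕ => (2*B*c'^n) * t) Filter.atTop (nhds 0) := by
        have h1 : Filter.Tendsto (fun n : ℕ => c'^n) Filter.atTop (nhds 0) :=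
          tendsto_pow_atTop_nhds_zero_of_lt_one hc'0 hc'1
        have h2 := (h1.const_mul (2*B)).mul_const t
        simpa using h2
      exact ge_of_tendsto' hlim (fun n => bnd n t ht)
    exact sub_eq_zero.mp (norm_le_zero_iff.mp h0)
  refine ⟨?_, heq⟩
  intro t ht γ hγ
  rw [heq t ht, sub_self, norm_zero]
  have htpos : 0 < t := hγ.1.trans hγ.2
  have hγpos : 0 < γ := hγ.1
  positivity
end

section
/- Let p₀, p₁ be α-strongly log-concave probability densities on ℝᵈ (i.e., −log p_j is α-strongly convex). Then there exist constants c₀, c₁ > 0 such that the density p_t of X_t = (1−t)X₀ + tX₁, for independent X₀ ∼ p₀ and X₁ ∼ p₁, satisfies p_t(z) ≤ c₀ exp(−c₁‖z‖²) for all z ∈ ℝᵈ and all t ∈ [0,1]. -/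
/-!
If `φ = -log p` is `α`-strongly convex, then `φ - (α/2)‖x‖²` is convex, hence bounded on the unit
ball and, by convexity along rays from the origin, bounded below by an affine function of `‖x‖`.
So `φ` grows at least like `(α/4)‖x‖²` and `p x ≤ C exp (-(α/4)‖x‖²)`.  Writing `u = z - tδ` and
`v = z + (1-t)δ`, both `‖z‖` and `‖δ‖` are at most `‖u‖ + ‖v‖`, so the integrand of `p_t(z)` is
at most `C₀ C₁ exp (-(α/16)‖z‖²) exp (-(α/16)‖δ‖²)`, and integrating in `δ` gives the bound.
-/

open MeasureTheory Real

lemma ConvexOn.neg_mul_le_of_abs_le_on_unitBall {E : Type*} [NormedAddCommGroup E]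
    [NormedSpace ℝ E] {ψ : E → ℝ} {K : ℝ} (hψ : ConvexOn ℝ Set.univ ψ)
    (hK : ∀ x, ‖x‖ ≤ 1 → |ψ x| ≤ K) (x : E) : -K * (2 * ‖x‖ + 1) ≤ ψ x := by
  have hK₀ : |ψ 0| ≤ K := hK 0 (by simp)
  rcases le_or_gt ‖x‖ 1 with hx | hx
  · nlinarith [neg_abs_le (ψ x), hK x hx, norm_nonneg x, abs_nonneg (ψ 0)]
  set r := ‖x‖
  have hr : 0 < r := one_pos.trans hx
  have hu : |ψ (r⁻¹ • x)| ≤ K := hK _ (by simp [norm_smul, r, hr.ne'])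
  -- convexity on the segment from `0` to `x`, evaluated at the point `r⁻¹ • x` of norm one
  have hseg := hψ.2 (Set.mem_univ 0) (Set.mem_univ x) (sub_nonneg.2 (inv_le_one_of_one_le₀ hx.le))
    (inv_nonneg.2 hr.le) (sub_add_cancel 1 r⁻¹)
  simp only [smul_zero, zero_add, smul_eq_mul] at hseg
  have hray : r * ψ (r⁻¹ • x) ≤ (r - 1) * ψ 0 + ψ x := by
    calc r * ψ (r⁻¹ • x) ≤ r * ((1 - r⁻¹) * ψ 0 + r⁻¹ * ψ x) := by gcongr
      _ = (r - 1) * ψ 0 + ψ x := by field_simp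
  have hψu : -K ≤ ψ (r⁻¹ • x) := (neg_abs_le _).trans' (neg_le_neg hu)
  have hψ0 : ψ 0 ≤ K := (le_abs_self _).trans hK₀
  nlinarith [mul_le_mul_of_nonneg_left hψu hr.le,
    mul_le_mul_of_nonneg_left hψ0 (sub_nonneg.2 hx.le), (abs_nonneg (ψ 0)).trans hK₀]

section InnerProductSpace

variable {E : Type*} [NormedAddCommGroup E] [InnerProductSpace ℝ E] [FiniteDimensional ℝ E]

lemma StrongConvexOn.exists_quadratic_lower_bound {f : E → ℝ} {α : ℝ} (hα : 0 < α)
    (hf : StrongConvexOn Set.univ α f) : ∃ c, ∀ x, α / 4 * ‖x‖ ^ 2 - c ≤ f x := by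
  have hψ := strongConvexOn_iff_convex.mp hf
  obtain ⟨K, hK⟩ := (isCompact_closedBall (0 : E) 1).exists_bound_of_continuousOn
    ((hψ.continuousOn isOpen_univ).mono (Set.subset_univ _))
  refine ⟨K + 4 * K ^ 2 / α, fun x => ?_⟩
  have hlin := hψ.neg_mul_le_of_abs_le_on_unitBall (fun y hy => hK y (by simpa using hy)) x
  have hsq : 0 ≤ α / 4 * ‖x‖ ^ 2 - 2 * K * ‖x‖ + 4 * K ^ 2 / α := by
    have : α / 4 * ‖x‖ ^ 2 - 2 * K * ‖x‖ + 4 * K ^ 2 / α = (α * ‖x‖ - 4 * K) ^ 2 / (4 * α) := by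
      field_simp; ring
    rw [this]; positivity
  linarith

lemma exists_le_mul_exp_of_strongConvexOn_neg_log {p : E → ℝ} {α : ℝ} (hα : 0 < α)
    (hpos : ∀ x, 0 < p x) (hslc : StrongConvexOn Set.univ α (fun x => -log (p x))) :
    ∃ C > 0, ∀ x, p x ≤ C * exp (-(α / 4) * ‖x‖ ^ 2) := by
  obtain ⟨c, hc⟩ := hslc.exists_quadratic_lower_bound hα
  refine ⟨exp c, exp_pos c, fun x => ?_⟩
  calc p x = exp (-(-log (p x))) := by rw [neg_neg, exp_log (hpos x)]
    _ ≤ exp (c + -(α / 4) * ‖x‖ ^ 2) := exp_le_exp.2 (by linarith [hc x])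
    _ = exp c * exp (-(α / 4) * ‖x‖ ^ 2) := exp_add _ _

variable [MeasurableSpace E] [BorelSpace E]

lemma integrable_exp_neg_mul_sq_norm {b : ℝ} (hb : 0 < b) :
    Integrable (fun v : E => exp (-b * ‖v‖ ^ 2)) := by
  refine (GaussianFourier.integrable_cexp_neg_mul_sq_norm_add (V := E) (b := b)
    (by simpa using hb) 0 0).norm.congr (Filter.Eventually.of_forall fun v => ?_)
  simp only [zero_mul, add_zero, ← Complex.ofReal_pow, ← Complex.ofReal_neg, ← Complex.ofReal_mul,
    Complex.norm_exp_ofReal]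

end InnerProductSpace

lemma sq_norm_add_sq_norm_le {E : Type*} [SeminormedAddCommGroup E] [NormedSpace ℝ E] {t : ℝ}
    (ht : t ∈ Set.Icc (0 : ℝ) 1) (z δ : E) :
    ‖z‖ ^ 2 + ‖δ‖ ^ 2 ≤ 4 * (‖z - t • δ‖ ^ 2 + ‖z + (1 - t) • δ‖ ^ 2) := by
  obtain ⟨ht₀, ht₁⟩ := ht
  set u := z - t • δ
  set v := z + (1 - t) • δ
  have hz : ‖z‖ ≤ ‖u‖ + ‖v‖ :=
    calc ‖z‖ = ‖(1 - t) • u + t • v‖ := by congr 1; simp only [u, v]; module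
      _ ≤ (1 - t) * ‖u‖ + t * ‖v‖ := by
        refine (norm_add_le _ _).trans_eq ?_
        rw [norm_smul, norm_smul, Real.norm_of_nonneg (sub_nonneg.2 ht₁), Real.norm_of_nonneg ht₀]
      _ ≤ ‖u‖ + ‖v‖ := by nlinarith [norm_nonneg u, norm_nonneg v]
  have hδ : ‖δ‖ ≤ ‖u‖ + ‖v‖ :=
    calc ‖δ‖ = ‖v - u‖ := by congr 1; simp only [u, v]; module
      _ ≤ ‖u‖ + ‖v‖ := (norm_sub_le _ _).trans_eq (add_comm _ _)
  nlinarith [norm_nonneg z, norm_nonneg δ, sq_nonneg (‖u‖ - ‖v‖)]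

lemma integral_interpolation_le {E : Type*} [NormedAddCommGroup E] [InnerProductSpace ℝ E]
    [FiniteDimensional ℝ E] [MeasurableSpace E] [BorelSpace E] {p₀ p₁ : E → ℝ} {a C₀ C₁ t : ℝ}
    (ha : 0 < a) (hp₀_nonneg : ∀ x, 0 ≤ p₀ x) (hp₁_nonneg : ∀ x, 0 ≤ p₁ x)
    (hp₀ : ∀ x, p₀ x ≤ C₀ * exp (-a * ‖x‖ ^ 2)) (hp₁ : ∀ x, p₁ x ≤ C₁ * exp (-a * ‖x‖ ^ 2))
    (ht : t ∈ Set.Icc (0 : ℝ) 1) (z : E) :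
    ∫ δ, p₀ (z - t • δ) * p₁ (z + (1 - t) • δ) ≤
      C₀ * C₁ * (∫ δ : E, exp (-(a / 4) * ‖δ‖ ^ 2)) * exp (-(a / 4) * ‖z‖ ^ 2) := by
  have hC₀ : 0 ≤ C₀ := nonneg_of_mul_nonneg_left ((hp₀_nonneg 0).trans (hp₀ 0)) (exp_pos _)
  have hC₁ : 0 ≤ C₁ := nonneg_of_mul_nonneg_left ((hp₁_nonneg 0).trans (hp₁ 0)) (exp_pos _)
  set K := C₀ * C₁ * exp (-(a / 4) * ‖z‖ ^ 2)
  have hpt : ∀ δ, p₀ (z - t • δ) * p₁ (z + (1 - t) • δ) ≤ K * exp (-(a / 4) * ‖δ‖ ^ 2) := by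
    intro δ
    have hquad := sq_norm_add_sq_norm_le ht z δ
    calc p₀ (z - t • δ) * p₁ (z + (1 - t) • δ)
        ≤ C₀ * exp (-a * ‖z - t • δ‖ ^ 2) * (C₁ * exp (-a * ‖z + (1 - t) • δ‖ ^ 2)) :=
          mul_le_mul (hp₀ _) (hp₁ _) (hp₁_nonneg _) (by positivity)
      _ = C₀ * C₁ * exp (-a * (‖z - t • δ‖ ^ 2 + ‖z + (1 - t) • δ‖ ^ 2)) := by
          rw [mul_add, exp_add]; ring
      _ ≤ C₀ * C₁ * exp (-(a / 4) * (‖z‖ ^ 2 + ‖δ‖ ^ 2)) :=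
          mul_le_mul_of_nonneg_left (exp_le_exp.2 (by nlinarith)) (by positivity)
      _ = K * exp (-(a / 4) * ‖δ‖ ^ 2) := by rw [mul_add, exp_add]; ring
  calc ∫ δ, p₀ (z - t • δ) * p₁ (z + (1 - t) • δ)
      ≤ ∫ δ, K * exp (-(a / 4) * ‖δ‖ ^ 2) :=
        integral_mono_of_nonneg (Filter.Eventually.of_forall fun _ =>
          mul_nonneg (hp₀_nonneg _) (hp₁_nonneg _))
          ((integrable_exp_neg_mul_sq_norm (by positivity)).const_mul K)
          (Filter.Eventually.of_forall hpt)
    _ = C₀ * C₁ * (∫ δ : E, exp (-(a / 4) * ‖δ‖ ^ 2)) * exp (-(a / 4) * ‖z‖ ^ 2) := by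
        rw [integral_const_mul]; ring

theorem strongly_logconcave_density_gaussian_bound_general
    {d : ℕ} (p₀ p₁ : EuclideanSpace ℝ (Fin d) → ℝ) (α : ℝ) (hα : 0 < α)
    (hpos₀ : ∀ x, 0 < p₀ x) (hpos₁ : ∀ x, 0 < p₁ x)
    (hslc₀ : StrongConvexOn Set.univ α (fun x => -Real.log (p₀ x)))
    (hslc₁ : StrongConvexOn Set.univ α (fun x => -Real.log (p₁ x))) :
    ∃ c₀ > (0 : ℝ), ∃ c₁ > (0 : ℝ), ∀ t ∈ Set.Icc (0 : ℝ) 1, ∀ z : EuclideanSpace ℝ (Fin d),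
      (∫ δ, p₀ (z - t • δ) * p₁ (z + (1 - t) • δ)) ≤ c₀ * Real.exp (-c₁ * ‖z‖ ^ 2) := by
  obtain ⟨C₀, hC₀, hp₀⟩ := exists_le_mul_exp_of_strongConvexOn_neg_log hα hpos₀ hslc₀
  obtain ⟨C₁, hC₁, hp₁⟩ := exists_le_mul_exp_of_strongConvexOn_neg_log hα hpos₁ hslc₁
  have hG := integral_exp_pos (μ := volume) (integrable_exp_neg_mul_sq_norm
    (E := EuclideanSpace ℝ (Fin d)) (b := α / 4 / 4) (by positivity))
  refine ⟨C₀ * C₁ * _, mul_pos (mul_pos hC₀ hC₁) hG, α / 4 / 4, by positivity, fun t ht z => ?_⟩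
  exact integral_interpolation_le (by positivity) (fun x => (hpos₀ x).le) (fun x => (hpos₁ x).le)
    hp₀ hp₁ ht z

/-- Let `p₀, p₁` be `α`-strongly log-concave probability densities on `ℝᵈ`
(i.e. `−log p_j` is `α`-strongly convex). Then there exist constants `c₀, c₁ > 0` such that
the density `p_t(z) = ∫ p₀(z − tδ) p₁(z + (1−t)δ) dδ` of `X_t = (1−t)X₀ + tX₁` satisfies
`p_t(z) ≤ c₀ exp(−c₁ ‖z‖²)` for all `z ∈ ℝᵈ` and all `t ∈ [0,1]`. -/
theorem strongly_logconcave_density_gaussian_bound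
    {d : ℕ} (p₀ p₁ : EuclideanSpace ℝ (Fin d) → ℝ) (α : ℝ) (hα : 0 < α)
    (hpos₀ : ∀ x, 0 < p₀ x) (hpos₁ : ∀ x, 0 < p₁ x)
    (hint₀ : ∫ x, p₀ x = 1) (hint₁ : ∫ x, p₁ x = 1)
    (hslc₀ : StrongConvexOn Set.univ α (fun x => -Real.log (p₀ x)))
    (hslc₁ : StrongConvexOn Set.univ α (fun x => -Real.log (p₁ x))) :
    ∃ c₀ > (0 : ℝ), ∃ c₁ > (0 : ℝ), ∀ t ∈ Set.Icc (0 : ℝ) 1, ∀ z : EuclideanSpace ℝ (Fin d),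
      (∫ δ, p₀ (z - t • δ) * p₁ (z + (1 - t) • δ)) ≤ c₀ * Real.exp (-c₁ * ‖z‖ ^ 2) :=
  strongly_logconcave_density_gaussian_bound_general p₀ p₁ α hα hpos₀ hpos₁ hslc₀ hslc₁
end
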